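/- Let $(\mathbf{X}_n)_{n\geq 0}$ be a subcritical $d$-type Galton--Watson process with immigration and let $0 < \alpha < 1$. If $\mathbb{E}\|\mathbf{A}_{1,1;i}\| < \infty$ for all $i$ (which holds by subcriticality) and $\mathbb{E}\|\mathbf{B}\|^\alpha < \infty$, then $\mathbf{Y} = \sum_{i=0}^\infty \Pi_i \circ \mathbf{B}_{i+1}$ satisfies $\mathbb{E}\|\mathbf{Y}\|^\alpha < \infty$. -/

import Mathlib

/-!
For `0 < α ≤ 1` the map `x ↦ x ^ α` is subadditive, so `𝔼‖Y‖^α ≤ ∑ₙ 𝔼‖Πₙ ∘ Bₙ‖^α`.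
The immigrant vector `Bₙ` is independent of the branching variables; freezing `Bₙ = b` and
applying Jensen's inequality to the concave `x ↦ x ^ α` gives `𝔼‖Πₙ ∘ Bₙ‖^α ≤ 𝔼 φₙ(Bₙ)^α` with
`φₙ(b) = 𝔼‖Πₙ ∘ b‖`. Generation by generation (Wald's identity)
`𝔼 (Πₙ ∘ k) = k Mⁿ`, and Gelfand's formula turns `ρ(M) < 1` into `‖Mⁿ‖ ≤ C rⁿ` with `r < 1`.
Hence `𝔼‖Πₙ ∘ Bₙ‖^α ≤ (C rⁿ)^α 𝔼‖B‖^α`, a convergent geometric series.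
-/

open MeasureTheory ProbabilityTheory Finset
open scoped ENNReal

/-- The branching operator `θ` built from offspring vectors
`A j i : Ω → Fin d → ℕ`: `(θ∘k)_l = ∑ j, ∑_{i < k j} (A j i)_l`. -/
noncomputable def theta {Ω : Type*} {d : ℕ} (A : Fin d → ℕ → Ω → Fin d → ℕ)
    (k : Fin d → ℕ) (ω : Ω) : Fin d → ℕ :=
  fun l => ∑ j, ∑ i ∈ range (k j), A j i ω l

/-- `PiComp A n Z = θ₀ ∘ θ₁ ∘ ⋯ ∘ θ_{n-1} ∘ Z`, where `θ_m` is the branching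
operator built from the generation-`m` offspring variables `A m`. -/
noncomputable def PiComp {Ω : Type*} {d : ℕ}
    (A : ℕ → Fin d → ℕ → Ω → Fin d → ℕ) :
    ℕ → (Ω → Fin d → ℕ) → Ω → Fin d → ℕ
  | 0, Z => Z
  | n + 1, Z => fun ω => theta (A 0) (PiComp (fun m => A (m + 1)) n Z ω) ω

open Filter
open scoped NNReal

theorem ENNReal.finsetSum_rpow_le {ι : Type*} (s : Finset ι) (f : ι → ℝ≥0∞) {α : ℝ}
    (hα0 : 0 < α) (hα1 : α ≤ 1) : (∑ i ∈ s, f i) ^ α ≤ ∑ i ∈ s, f i ^ α := by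
  classical
  induction s using Finset.induction_on with
  | empty => simp [hα0]
  | insert i s hi ih =>
    rw [sum_insert hi, sum_insert hi]
    exact (ENNReal.rpow_add_le_add_rpow _ _ hα0.le hα1).trans (add_le_add_right ih _)

theorem ENNReal.tsum_rpow_le {ι : Type*} (f : ι → ℝ≥0∞) {α : ℝ} (hα0 : 0 < α) (hα1 : α ≤ 1) :
    (∑' i, f i) ^ α ≤ ∑' i, f i ^ α := by
  rw [ENNReal.tsum_eq_iSup_sum, ENNReal.tsum_eq_iSup_sum]
  have hsup := (ENNReal.orderIsoRpow α hα0).map_iSup fun s : Finset ι => ∑ i ∈ s, f i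
  simp only [ENNReal.orderIsoRpow_apply] at hsup
  rw [hsup]
  exact iSup_mono fun s => ENNReal.finsetSum_rpow_le s f hα0 hα1

theorem ENNReal.tsum_rpow_geometric_lt_top {C r : ℝ≥0} (hr : r < 1) {α : ℝ} (hα : 0 < α) :
    ∑' n : ℕ, ((C * r ^ n : ℝ≥0) : ℝ≥0∞) ^ α < ⊤ := by
  have hterm : ∀ n : ℕ,
      ((C * r ^ n : ℝ≥0) : ℝ≥0∞) ^ α = (C : ℝ≥0∞) ^ α * ((r : ℝ≥0∞) ^ α) ^ n := by
    intro n
    rw [ENNReal.coe_mul, ENNReal.mul_rpow_of_nonneg _ _ hα.le, ENNReal.coe_pow,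
      ← ENNReal.rpow_natCast, ← ENNReal.rpow_mul, mul_comm (n : ℝ), ENNReal.rpow_mul,
      ENNReal.rpow_natCast]
  simp_rw [hterm, ENNReal.tsum_mul_left, ENNReal.tsum_geometric]
  exact ENNReal.mul_lt_top (ENNReal.rpow_lt_top_of_nonneg hα.le ENNReal.coe_ne_top)
    (ENNReal.inv_lt_top.mpr (tsub_pos_of_lt (ENNReal.rpow_lt_one (by exact_mod_cast hr) hα)))

/-- Gelfand's formula makes `‖a ^ n‖₊ ≤ r ^ n` eventually, for any `r` above the spectral radius. -/
theorem exists_nnnorm_pow_le_geometric_of_spectralRadius_lt_one {A : Type*} [NormedRing A]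
    [NormedAlgebra ℂ A] [CompleteSpace A] {a : A} (ha : spectralRadius ℂ a < 1) :
    ∃ C r : ℝ≥0, r < 1 ∧ ∀ n : ℕ, ‖a ^ n‖₊ ≤ C * r ^ n := by
  obtain ⟨r, hρr, hr1⟩ := exists_between ha
  lift r to ℝ≥0 using (hr1.trans ENNReal.one_lt_top).ne
  have hr0 : r ≠ 0 := ENNReal.coe_ne_zero.mp (ne_bot_of_gt hρr)
  have hev : ∀ᶠ n : ℕ in atTop, ‖‖a ^ n‖‖ ≤ ‖(r : ℝ) ^ n‖ := by
    filter_upwards [(spectrum.pow_nnnorm_pow_one_div_tendsto_nhds_spectralRadius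
      a).eventually_lt_const hρr, eventually_ge_atTop 1] with n hn hn1
    have hpow := ENNReal.rpow_le_rpow hn.le (Nat.cast_nonneg n)
    rw [← ENNReal.rpow_mul, one_div_mul_cancel (by positivity), ENNReal.rpow_one,
      ENNReal.rpow_natCast] at hpow
    have h : ‖a ^ n‖₊ ≤ r ^ n := by exact_mod_cast hpow
    simpa using NNReal.coe_le_coe.mpr h
  obtain ⟨C, hC, hbound⟩ :=
    Asymptotics.bound_of_isBigO_nat_atTop (Asymptotics.IsBigO.of_bound' hev)
  lift C to ℝ≥0 using hC.le
  refine ⟨C, r, by exact_mod_cast hr1, fun n => ?_⟩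
  rw [← NNReal.coe_le_coe]
  simpa using hbound (pow_ne_zero n (NNReal.coe_ne_zero.mpr hr0))

section
attribute [local instance] Matrix.linftyOpNormedRing Matrix.linftyOpNormedAlgebra

/-- In the `ℓ^∞` operator norm, `‖X‖₊` is the largest row sum of `‖X j l‖₊`. -/
theorem Matrix.exists_sum_pow_apply_le_geometric {ι : Type*} [Fintype ι] [DecidableEq ι]
    (P : Matrix ι ι ℝ≥0) (hP : spectralRadius ℂ (P.map fun x => ((x : ℝ) : ℂ)) < 1) :
    ∃ C r : ℝ≥0, r < 1 ∧ ∀ (n : ℕ) (j : ι), ∑ l, (P ^ n) j l ≤ C * r ^ n := by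
  have : CompleteSpace (Matrix ι ι ℂ) := FiniteDimensional.complete ℂ _
  obtain ⟨C, r, hr, hbound⟩ := exists_nnnorm_pow_le_geometric_of_spectralRadius_lt_one hP
  refine ⟨C, r, hr, fun n j => le_trans ?_ (hbound n)⟩
  let φ : ℝ≥0 →+* ℂ := Complex.ofRealHom.comp NNReal.toRealHom
  have hpow : (P.map fun x => ((x : ℝ) : ℂ)) ^ n = (P ^ n).map φ :=
    (map_pow φ.mapMatrix P n).symm
  rw [hpow, Matrix.linfty_opNNNorm_def]
  refine le_trans (le_of_eq ?_)
    (Finset.le_sup (f := fun i => ∑ l, ‖(P ^ n).map φ i l‖₊) (mem_univ j))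
  simp [φ]

end

theorem lintegral_rpow_le_rpow_lintegral {Ω : Type*} [MeasurableSpace Ω] {μ : Measure Ω}
    [IsProbabilityMeasure μ] {f : Ω → ℝ≥0∞} (hf : AEMeasurable f μ) {α : ℝ} (hα0 : 0 ≤ α)
    (hα1 : α ≤ 1) : ∫⁻ ω, f ω ^ α ∂μ ≤ (∫⁻ ω, f ω ∂μ) ^ α := by
  simpa using ENNReal.lintegral_mul_norm_pow_le hf aemeasurable_const (g := fun _ => 1)
    hα0 (sub_nonneg.mpr hα1) (add_sub_cancel α 1)

theorem lintegral_apply_eq_ofReal_integral {Ω : Type*} [MeasurableSpace Ω] {μ : Measure Ω}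
    {d : ℕ} {V : Ω → Fin d → ℕ} (hV : Measurable V)
    (hfin : ∫⁻ ω, ((∑ l, V ω l : ℕ) : ℝ≥0∞) ∂μ < ⊤) (l : Fin d) :
    ∫⁻ ω, (V ω l : ℝ≥0∞) ∂μ = ENNReal.ofReal (∫ ω, (V ω l : ℝ) ∂μ) := by
  have hle : ∫⁻ ω, (V ω l : ℝ≥0∞) ∂μ ≤ ∫⁻ ω, ((∑ l, V ω l : ℕ) : ℝ≥0∞) ∂μ :=
    lintegral_mono fun ω => Nat.cast_le.mpr (single_le_sum (fun l _ => Nat.zero_le _) (mem_univ l))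
  rw [integral_eq_lintegral_of_nonneg_ae (Eventually.of_forall fun ω => Nat.cast_nonneg _)
    ((measurable_of_countable fun v : Fin d → ℕ => ((v l : ℕ) : ℝ)).comp hV).aestronglyMeasurable]
  simp_rw [ENNReal.ofReal_natCast]
  rw [ENNReal.ofReal_toReal (hle.trans_lt hfin).ne]

theorem measurable_iSup_comap_of_mem {Ω ι β : Type*} [mβ : MeasurableSpace β] (f : ι → Ω → β)
    {S : Set ι} {i : ι} (hi : i ∈ S) : Measurable[⨆ j ∈ S, mβ.comap (f j)] (f i) :=
  Measurable.of_comap_le (le_iSup₂ (f := fun j (_ : j ∈ S) => mβ.comap (f j)) i hi)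

theorem iIndepFun.indep_iSup_comap {Ω ι β : Type*} [MeasurableSpace Ω] [mβ : MeasurableSpace β]
    {μ : Measure Ω} {f : ι → Ω → β} (h : iIndepFun f μ) (hf : ∀ i, Measurable (f i))
    {S T : Set ι} (hST : Disjoint S T) :
    Indep (⨆ i ∈ S, mβ.comap (f i)) (⨆ i ∈ T, mβ.comap (f i)) μ :=
  indep_iSup_of_disjoint (fun i => (hf i).comap_le) h.iIndep hST

/-- On the fibre `{X = b}` the integrand is `G b`, which is independent of the fibre's indicator. -/
theorem lintegral_comp_eq_lintegral_map_of_indep {Ω β : Type*} {m mΩ : MeasurableSpace Ω}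
    {μ : Measure Ω} [MeasurableSpace β] [Countable β] [MeasurableSingletonClass β]
    {X : Ω → β} (hX : Measurable X) (hm : m ≤ mΩ) {G : β → Ω → ℝ≥0∞}
    (hG : ∀ b, Measurable[m] (G b)) (hind : Indep (MeasurableSpace.comap X ‹_›) m μ) :
    ∫⁻ ω, G (X ω) ω ∂μ = ∫⁻ b, ∫⁻ ω, G b ω ∂μ ∂(μ.map X) := by
  have hfiber : ∀ b, Measurable[MeasurableSpace.comap X ‹_›]
      ((X ⁻¹' {b}).indicator (1 : Ω → ℝ≥0∞)) :=
    fun b => measurable_const.indicator ⟨{b}, measurableSet_singleton b, rfl⟩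
  have hsplit : ∀ ω, G (X ω) ω = ∑' b, (X ⁻¹' {b}).indicator 1 ω * G b ω := by
    intro ω
    rw [tsum_eq_single (X ω) fun b hb => by simp [Ne.symm hb]]
    simp
  simp_rw [hsplit, lintegral_countable', Measure.map_apply hX (measurableSet_singleton _)]
  rw [lintegral_tsum (f := fun b ω => (X ⁻¹' {b}).indicator 1 ω * G b ω) fun b =>
    (((hfiber b).mono (measurable_iff_comap_le.mp hX) le_rfl).mul
      ((hG b).mono hm le_rfl)).aemeasurable]
  congr 1 with b
  rw [lintegral_mul_eq_lintegral_mul_lintegral_of_independent_measurableSpace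
    (measurable_iff_comap_le.mp hX) hm hind (hfiber b) (hG b),
    lintegral_indicator_one (hX (measurableSet_singleton b)), mul_comm]

section Branching

variable {Ω : Type*} {mA mΩ : MeasurableSpace Ω} {μ : Measure Ω} {d : ℕ}

theorem measurable_theta {A : Fin d → ℕ → Ω → Fin d → ℕ} (hA : ∀ j i, Measurable (A j i))
    (k : Fin d → ℕ) : Measurable (theta A k) :=
  measurable_pi_iff.mpr fun l => Finset.measurable_sum _ fun j _ =>
    Finset.measurable_sum _ fun i _ => (measurable_pi_apply l).comp (hA j i)

theorem Measurable.theta {A : Fin d → ℕ → Ω → Fin d → ℕ} (hA : ∀ j i, Measurable (A j i))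
    {K : Ω → Fin d → ℕ} (hK : Measurable K) : Measurable fun ω => _root_.theta A (K ω) ω :=
  (measurable_from_prod_countable_right (f := fun p : (Fin d → ℕ) × Ω => _root_.theta A p.1 p.2)
    fun k => measurable_theta hA k).comp (hK.prodMk measurable_id)

theorem measurable_piComp {A : ℕ → Fin d → ℕ → Ω → Fin d → ℕ}
    (hA : ∀ m j i, Measurable (A m j i)) {Z : Ω → Fin d → ℕ} (hZ : Measurable Z) (n : ℕ) :
    Measurable (PiComp A n Z) := by
  induction n generalizing A with
  | zero => exact hZ
  | succ n ih => exact (ih fun m => hA (m + 1)).theta (hA 0)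

theorem piComp_apply_eq_piComp_const (A : ℕ → Fin d → ℕ → Ω → Fin d → ℕ) (Z : Ω → Fin d → ℕ)
    (n : ℕ) (ω : Ω) : PiComp A n Z ω = PiComp A n (fun _ => Z ω) ω := by
  induction n generalizing A with
  | zero => rfl
  | succ n ih => simp only [PiComp, ih (fun m => A (m + 1))]

theorem lintegral_theta_apply (P : Matrix (Fin d) (Fin d) ℝ≥0) {A : Fin d → ℕ → Ω → Fin d → ℕ}
    (hA : ∀ j i, Measurable (A j i)) (hP : ∀ j i l, ∫⁻ ω, (A j i ω l : ℝ≥0∞) ∂μ = P j l)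
    (k : Fin d → ℕ) (l : Fin d) :
    ∫⁻ ω, (theta A k ω l : ℝ≥0∞) ∂μ = ∑ j, k j * (P j l : ℝ≥0∞) := by
  have hAl : ∀ j i, Measurable fun ω => (A j i ω l : ℝ≥0∞) :=
    fun j i => measurable_from_top.comp ((measurable_pi_apply l).comp (hA j i))
  simp only [theta, Nat.cast_sum]
  rw [lintegral_finsetSum _ fun j _ => Finset.measurable_sum _ fun i _ => hAl j i]
  refine Finset.sum_congr rfl fun j _ => ?_
  rw [lintegral_finsetSum _ fun i _ => hAl j i]
  simp [hP]

variable [IsProbabilityMeasure μ]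

/-- The first generation is independent of the population `K` it starts from, which is built
from the later generations only. -/
theorem lintegral_piComp_const_apply (P : Matrix (Fin d) (Fin d) ℝ≥0)
    {A : ℕ → Fin d → ℕ → Ω → Fin d → ℕ} (hA : ∀ m j i, Measurable (A m j i))
    (hind : iIndepFun (fun p : ℕ × Fin d × ℕ => A p.1 p.2.1 p.2.2) μ)
    (hP : ∀ m j i l, ∫⁻ ω, (A m j i ω l : ℝ≥0∞) ∂μ = P j l) (n : ℕ) (k : Fin d → ℕ)
    (l : Fin d) :
    ∫⁻ ω, (PiComp A n (fun _ => k) ω l : ℝ≥0∞) ∂μ = ∑ j, k j * ((P ^ n) j l : ℝ≥0∞) := by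
  induction n generalizing A l with
  | zero => simp [PiComp, Matrix.one_apply, apply_ite]
  | succ n ih =>
    let σ : Set (ℕ × Fin d × ℕ) → MeasurableSpace Ω := fun S =>
      ⨆ p ∈ S, MeasurableSpace.comap (A p.1 p.2.1 p.2.2) inferInstance
    have hσ : ∀ S, σ S ≤ mΩ := fun S => iSup₂_le fun p _ => (hA p.1 p.2.1 p.2.2).comap_le
    let K := PiComp (fun m => A (m + 1)) n (fun _ => k)
    have hK : Measurable[σ {p | p.1 ≠ 0}] K :=
      measurable_piComp (mΩ := σ {p | p.1 ≠ 0})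
        (fun m j i => measurable_iSup_comap_of_mem (fun p : ℕ × Fin d × ℕ => A p.1 p.2.1 p.2.2)
          (i := (m + 1, j, i)) (Nat.succ_ne_zero m)) measurable_const n
    have hθ : ∀ κ, Measurable[σ {p | p.1 = 0}] fun ω => (theta (A 0) κ ω l : ℝ≥0∞) :=
      fun κ => measurable_from_top.comp ((measurable_pi_apply l).comp (measurable_theta
        (mΩ := σ {p | p.1 = 0}) (fun j i => measurable_iSup_comap_of_mem
          (fun p : ℕ × Fin d × ℕ => A p.1 p.2.1 p.2.2) (i := (0, j, i)) rfl) κ))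
    have hindep : Indep (MeasurableSpace.comap K inferInstance) (σ {p | p.1 = 0}) μ :=
      indep_of_indep_of_le_left (iIndepFun.indep_iSup_comap hind (fun p => hA p.1 p.2.1 p.2.2)
        (S := {p | p.1 ≠ 0}) (T := {p | p.1 = 0}) (Set.disjoint_left.mpr fun _ hp hp' => hp hp'))
        hK.comap_le
    have hKj : ∀ j, Measurable fun ω => (K ω j : ℝ≥0∞) :=
      fun j => measurable_from_top.comp ((measurable_pi_apply j).comp (hK.mono (hσ _) le_rfl))
    have hKmean : ∀ j, ∫⁻ ω, (K ω j : ℝ≥0∞) ∂μ = ∑ m, k m * ((P ^ n) m j : ℝ≥0∞) :=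
      ih (fun m => hA (m + 1))
        (iIndepFun.precomp (g := fun p : ℕ × Fin d × ℕ => (p.1 + 1, p.2))
          (fun p q h => by simpa [Prod.ext_iff] using h) hind) (fun m => hP (m + 1))
    calc ∫⁻ ω, (PiComp A (n + 1) (fun _ => k) ω l : ℝ≥0∞) ∂μ
        = ∫⁻ ω, (theta (A 0) (K ω) ω l : ℝ≥0∞) ∂μ := rfl
      _ = ∫⁻ κ, ∑ j, κ j * (P j l : ℝ≥0∞) ∂(μ.map K) := by
        rw [lintegral_comp_eq_lintegral_map_of_indep (hK.mono (hσ _) le_rfl) (hσ _) hθ hindep]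
        simp_rw [lintegral_theta_apply P (hA 0) (hP 0)]
      _ = ∑ j, (∫⁻ ω, (K ω j : ℝ≥0∞) ∂μ) * P j l := by
        rw [lintegral_map (measurable_of_countable _) (hK.mono (hσ _) le_rfl),
          lintegral_finsetSum _ fun j _ => (hKj j).mul_const _]
        exact Finset.sum_congr rfl fun j _ => lintegral_mul_const _ (hKj j)
      _ = ∑ j, k j * ((P ^ (n + 1)) j l : ℝ≥0∞) := by
        simp only [hKmean, pow_succ, Matrix.mul_apply, ENNReal.ofNNReal_finsetSum,
          ENNReal.coe_mul, Finset.sum_mul, Finset.mul_sum, mul_assoc]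
        exact Finset.sum_comm

theorem lintegral_norm_piComp_const_le (P : Matrix (Fin d) (Fin d) ℝ≥0)
    {A : ℕ → Fin d → ℕ → Ω → Fin d → ℕ} (hA : ∀ m j i, Measurable (A m j i))
    (hind : iIndepFun (fun p : ℕ × Fin d × ℕ => A p.1 p.2.1 p.2.2) μ)
    (hP : ∀ m j i l, ∫⁻ ω, (A m j i ω l : ℝ≥0∞) ∂μ = P j l) {n : ℕ} {c : ℝ≥0}
    (hrow : ∀ j, ∑ l, (P ^ n) j l ≤ c) (k : Fin d → ℕ) :
    ∫⁻ ω, ((∑ l, PiComp A n (fun _ => k) ω l : ℕ) : ℝ≥0∞) ∂μ ≤ (∑ l, k l : ℕ) * c := by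
  have hl : ∀ l, Measurable fun ω => (PiComp A n (fun _ => k) ω l : ℝ≥0∞) := fun l =>
    measurable_from_top.comp ((measurable_pi_apply l).comp
      (measurable_piComp hA measurable_const n))
  simp only [Nat.cast_sum]
  rw [lintegral_finsetSum _ fun l _ => hl l]
  simp only [lintegral_piComp_const_apply P hA hind hP]
  rw [Finset.sum_comm, Finset.sum_mul]
  gcongr with j
  rw [← Finset.mul_sum, ← ENNReal.ofNNReal_finsetSum]
  gcongr
  exact hrow j

/-- Conditionally on the immigrants `Z`, Jensen's inequality for the concave `x ↦ x ^ α` bounds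
the `α`-th moment of their descendants by the `α`-th power of their mean. -/
theorem lintegral_norm_piComp_rpow_le (hmA : mA ≤ mΩ)
    {A : ℕ → Fin d → ℕ → Ω → Fin d → ℕ} (hA : ∀ m j i, Measurable[mA] (A m j i))
    {Z : Ω → Fin d → ℕ} (hZ : Measurable Z)
    (hind : Indep (MeasurableSpace.comap Z inferInstance) mA μ) {n : ℕ} {c : ℝ≥0∞}
    (hmean : ∀ k, ∫⁻ ω, ((∑ l, PiComp A n (fun _ => k) ω l : ℕ) : ℝ≥0∞) ∂μ ≤ (∑ l, k l : ℕ) * c)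
    {α : ℝ} (hα0 : 0 ≤ α) (hα1 : α ≤ 1) :
    ∫⁻ ω, ((∑ l, PiComp A n Z ω l : ℕ) : ℝ≥0∞) ^ α ∂μ
      ≤ c ^ α * ∫⁻ ω, ((∑ l, Z ω l : ℕ) : ℝ≥0∞) ^ α ∂μ := by
  let nrm : (Fin d → ℕ) → ℝ≥0∞ := fun v => ((∑ l, v l : ℕ) : ℝ≥0∞)
  have hPk : ∀ k, Measurable[mA] (PiComp A n (fun _ => k)) :=
    fun k => measurable_piComp (mΩ := mA) hA measurable_const n
  have hG : ∀ k, Measurable[mA] fun ω => nrm (PiComp A n (fun _ => k) ω) ^ α :=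
    fun k => (measurable_of_countable fun v => nrm v ^ α).comp (hPk k)
  calc ∫⁻ ω, nrm (PiComp A n Z ω) ^ α ∂μ
      = ∫⁻ ω, nrm (PiComp A n (fun _ => Z ω) ω) ^ α ∂μ := by
        simp_rw [← piComp_apply_eq_piComp_const]
    _ = ∫⁻ k, ∫⁻ ω, nrm (PiComp A n (fun _ => k) ω) ^ α ∂μ ∂(μ.map Z) :=
        lintegral_comp_eq_lintegral_map_of_indep hZ hmA hG hind
    _ ≤ ∫⁻ k, (nrm k * c) ^ α ∂(μ.map Z) := by
        gcongr with k
        exact (lintegral_rpow_le_rpow_lintegral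
          ((measurable_of_countable nrm).comp ((hPk k).mono hmA le_rfl)).aemeasurable hα0 hα1).trans
          (ENNReal.rpow_le_rpow (hmean k) hα0)
    _ = c ^ α * ∫⁻ ω, nrm (Z ω) ^ α ∂μ := by
        rw [lintegral_map (measurable_of_countable _) hZ]
        simp_rw [ENNReal.mul_rpow_of_nonneg _ _ hα0, mul_comm _ (c ^ α)]
        exact lintegral_const_mul _ ((measurable_of_countable fun v => nrm v ^ α).comp hZ)

theorem lintegral_norm_piComp_immigrant_rpow_le {A : ℕ → Fin d → ℕ → Ω → Fin d → ℕ}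
    {B : ℕ → Ω → Fin d → ℕ} (hA : ∀ m j i, Measurable (A m j i)) (hB : ∀ n, Measurable (B n))
    (hind : iIndepFun (Sum.elim (fun p : ℕ × Fin d × ℕ => A p.1 p.2.1 p.2.2) B) μ)
    (P : Matrix (Fin d) (Fin d) ℝ≥0) (hP : ∀ m j i l, ∫⁻ ω, (A m j i ω l : ℝ≥0∞) ∂μ = P j l)
    {n : ℕ} {c : ℝ≥0} (hrow : ∀ j, ∑ l, (P ^ n) j l ≤ c) {α : ℝ} (hα0 : 0 ≤ α) (hα1 : α ≤ 1) :
    ∫⁻ ω, ((∑ l, PiComp A n (B n) ω l : ℕ) : ℝ≥0∞) ^ α ∂μ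
      ≤ (c : ℝ≥0∞) ^ α * ∫⁻ ω, ((∑ l, B n ω l : ℕ) : ℝ≥0∞) ^ α ∂μ := by
  let f : (ℕ × Fin d × ℕ) ⊕ ℕ → Ω → Fin d → ℕ := Sum.elim (fun p => A p.1 p.2.1 p.2.2) B
  have hf : ∀ i, Measurable (f i) := Sum.forall.mpr ⟨fun p => hA _ _ _, hB⟩
  have hBA : Indep (MeasurableSpace.comap (B n) inferInstance)
      (⨆ i ∈ Set.range Sum.inl, MeasurableSpace.comap (f i) inferInstance) μ :=
    indep_of_indep_of_le_left (iIndepFun.indep_iSup_comap hind hf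
      (Set.disjoint_singleton_left.mpr fun ⟨_, h⟩ => Sum.inl_ne_inr h))
      (measurable_iSup_comap_of_mem f (Set.mem_singleton (Sum.inr n))).comap_le
  exact lintegral_norm_piComp_rpow_le (iSup₂_le fun i _ => (hf i).comap_le)
    (fun m j i => measurable_iSup_comap_of_mem f (Set.mem_range_self (m, j, i))) (hB n) hBA
    (lintegral_norm_piComp_const_le P hA (iIndepFun.precomp Sum.inl_injective hind) hP hrow)
    hα0 hα1

end Branching

/-- Main theorem, case `0 < α < 1`: for a subcritical multitype Galton–Watson
process with immigration, if `𝔼‖A‖ < ∞` for every offspring type (automatic by subcriticality) and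
`𝔼‖B‖^α < ∞`, then the stationary random vector
`Y = ∑ₙ Πₙ ∘ B` has `𝔼‖Y‖^α < ∞`. -/
theorem stationary_moment_lt_top_concave
    {Ω : Type*} [MeasureSpace Ω] [IsProbabilityMeasure (ℙ : Measure Ω)]
    (d : ℕ) (A : ℕ → Fin d → ℕ → Ω → Fin d → ℕ) (B : ℕ → Ω → Fin d → ℕ)
    (hmeasA : ∀ n j i, Measurable (A n j i)) (hmeasB : ∀ n, Measurable (B n))
    (hindep : iIndepFun
      (Sum.elim (fun p : ℕ × Fin d × ℕ => A p.1 p.2.1 p.2.2) B :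
        (ℕ × Fin d × ℕ) ⊕ ℕ → Ω → Fin d → ℕ) ℙ)
    (hidentA : ∀ n j i, IdentDistrib (A n j i) (A 0 j 0) ℙ ℙ)
    (hidentB : ∀ n, IdentDistrib (B n) (B 0) ℙ ℙ)
    (M : Matrix (Fin d) (Fin d) ℝ)
    (hM : ∀ j l, M j l = ∫ ω, (A 0 j 0 ω l : ℝ) ∂ℙ)
    (hsub : spectralRadius ℂ (M.map (Complex.ofReal)) < 1)
    (α : ℝ) (hα0 : 0 < α) (hα1 : α < 1)
    (hAmom : ∀ j, ∫⁻ ω, ((∑ l, A 0 j 0 ω l : ℕ) : ℝ≥0∞) ∂ℙ < ⊤)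
    (hBmom : ∫⁻ ω, ((∑ l, B 0 ω l : ℕ) : ℝ≥0∞) ^ α ∂ℙ < ⊤) :
    ∫⁻ (ω : Ω),
        (∑' n : ℕ, ((∑ l, PiComp A n (B n) ω l : ℕ) : ℝ≥0∞)) ^ α ∂ℙ < ⊤ := by
  have hM0 : ∀ j l, 0 ≤ M j l := fun j l => hM j l ▸ integral_nonneg fun ω => Nat.cast_nonneg _
  let P : Matrix (Fin d) (Fin d) ℝ≥0 := Matrix.of fun j l => (M j l).toNNReal
  have hP : ∀ m j i l, ∫⁻ ω, (A m j i ω l : ℝ≥0∞) = P j l := fun m j i l => calc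
    _ = ∫⁻ ω, (A 0 j 0 ω l : ℝ≥0∞) := ((hidentA m j i).comp
      (measurable_of_countable fun v : Fin d → ℕ => (v l : ℝ≥0∞))).lintegral_eq
    _ = ENNReal.ofReal (M j l) := by
      rw [lintegral_apply_eq_ofReal_integral (hmeasA 0 j 0) (hAmom j), hM]
  obtain ⟨C, r, hr, hrow⟩ := P.exists_sum_pow_apply_le_geometric (by
    convert hsub using 2
    ext j l
    simp [P, hM0 j l])
  have hgen : ∀ n, ∫⁻ ω, ((∑ l, PiComp A n (B n) ω l : ℕ) : ℝ≥0∞) ^ α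
      ≤ ((C * r ^ n : ℝ≥0) : ℝ≥0∞) ^ α * ∫⁻ ω, ((∑ l, B 0 ω l : ℕ) : ℝ≥0∞) ^ α := fun n =>
    (lintegral_norm_piComp_immigrant_rpow_le hmeasA hmeasB hindep P hP (hrow n) hα0.le
      hα1.le).trans_eq <| congrArg _ ((hidentB n).comp (measurable_of_countable
        fun v : Fin d → ℕ => ((∑ l, v l : ℕ) : ℝ≥0∞) ^ α)).lintegral_eq
  calc ∫⁻ ω, (∑' n, ((∑ l, PiComp A n (B n) ω l : ℕ) : ℝ≥0∞)) ^ α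
      ≤ ∫⁻ ω, ∑' n, ((∑ l, PiComp A n (B n) ω l : ℕ) : ℝ≥0∞) ^ α :=
        lintegral_mono fun ω => ENNReal.tsum_rpow_le _ hα0 hα1.le
    _ = ∑' n, ∫⁻ ω, ((∑ l, PiComp A n (B n) ω l : ℕ) : ℝ≥0∞) ^ α :=
        lintegral_tsum fun n => ((measurable_of_countable
          fun v : Fin d → ℕ => ((∑ l, v l : ℕ) : ℝ≥0∞) ^ α).comp
            (measurable_piComp hmeasA (hmeasB n) n)).aemeasurable
    _ ≤ ∑' n, ((C * r ^ n : ℝ≥0) : ℝ≥0∞) ^ α * ∫⁻ ω, ((∑ l, B 0 ω l : ℕ) : ℝ≥0∞) ^ α :=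
        ENNReal.tsum_le_tsum hgen
    _ < ⊤ := by
        rw [ENNReal.tsum_mul_right]
        exact ENNReal.mul_lt_top (ENNReal.tsum_rpow_geometric_lt_top hr hα0) hBmom
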